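/- arXiv:1809.07067 — 2 statements merged into one kernel-verified Lean document; each statement's English description precedes it below -/
import Mathlib

section
/- For a 2×n array A with pairwise distinct entries, define the DAG D^k_A with root node the interval [1,n]; a node [a,b] is a leaf if 2(b−a+1) ≤ k; otherwise, letting a' and b' be the leftmost and rightmost columns among the positions of the k largest values in A[1,2][a..b], the node has left child [a, b'−1] when a < b' and right child [a'+1, b] when a' < b. Then any two distinct nodes p, q of D^k_A have different Top-k answer sets: the set of positions of the k largest values of A restricted to the columns of p differs from that for q. -/
/-- `InRange a b p` : `p` is a position of a 2-row array lying in columns `a..b`. -/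
def InRange (a b : ℕ) (p : ℕ × ℕ) : Prop :=
  (p.1 = 1 ∨ p.1 = 2) ∧ a ≤ p.2 ∧ p.2 ≤ b

/-- The set of positions of the `min(k, 2(b-a+1))` largest values of `A` restricted to
columns `a..b`: those positions in range dominated by fewer than `k` in-range values. -/
def TopkSet (A : ℕ → ℕ → ℝ) (k a b : ℕ) : Set (ℕ × ℕ) :=
  {p | InRange a b p ∧ {q | InRange a b q ∧ A p.1 p.2 < A q.1 q.2}.ncard < k}

/-- The leftmost column among the answers of the Top-k query on columns `a..b`. -/
noncomputable def leftCol (A : ℕ → ℕ → ℝ) (k a b : ℕ) : ℕ :=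
  sInf {c | ∃ r, (r, c) ∈ TopkSet A k a b}

/-- The rightmost column among the answers of the Top-k query on columns `a..b`. -/
noncomputable def rightCol (A : ℕ → ℕ → ℝ) (k a b : ℕ) : ℕ :=
  sSup {c | ∃ r, (r, c) ∈ TopkSet A k a b}

/-- `IsChild A k q p` : `q` is a non-leaf node (interval) and `p` is its left or right
child in the DAG `D^k_A`. -/
def IsChild (A : ℕ → ℕ → ℝ) (k : ℕ) (q p : ℕ × ℕ) : Prop :=
  k < 2 * (q.2 - q.1 + 1) ∧
    ((p = (q.1, rightCol A k q.1 q.2 - 1) ∧ q.1 < rightCol A k q.1 q.2) ∨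
     (p = (leftCol A k q.1 q.2 + 1, q.2) ∧ leftCol A k q.1 q.2 < q.2))

/-- The nodes of the DAG `D^k_A` on a `2 × n` array: the root is `[1, n]`, and the
children of a non-leaf node are as prescribed by `IsChild`. -/
inductive IsNode (A : ℕ → ℕ → ℝ) (k n : ℕ) : ℕ × ℕ → Prop
  | root : IsNode A k n (1, n)
  | child {q p : ℕ × ℕ} : IsNode A k n q → IsChild A k q p → IsNode A k n p

/-- `p` is a descendant of `q` in the DAG `D^k_A`. -/
def Descendant (A : ℕ → ℕ → ℝ) (k : ℕ) (p q : ℕ × ℕ) : Prop :=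
  Relation.TransGen (fun x y => IsChild A k y x) p q

/-- All entries of the `2 × n` array `A` are pairwise distinct. -/
def DistinctEntries (A : ℕ → ℕ → ℝ) (n : ℕ) : Prop :=
  Set.InjOn (fun p : ℕ × ℕ => A p.1 p.2) {p | InRange 1 n p}

/-!
At each boundary other than columns `1` and `n`, a node `[a, b]` of `D^k_A` carries a witness: for
the right boundary, an entry `z` in column `b + 1` that belongs to the Top-k answer of `[a, b + 1]`.
This is inherited from the parent, since a child is cut off just before a column of the parent's
answer and Top-k membership survives shrinking the interval.

Suppose some other node `q` reaching past column `b` had the same answer `T` as `[a, b]`. If some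
entry of `T` is smaller than `z`, then `z` is in the Top-k answer of `q`, i.e. in `T`, although it
lies outside `[a, b]`. Otherwise every entry of `T` beats `z`, so `|T|` is less than `k`; as
`|Top-k(q)| = min(k, |q|)`, the answer of `q` is all of `q`, which again does not fit in `[a, b]`.
-/

open Set

section TopK

variable {α β : Type*} [LinearOrder β]

def beaters (f : α → β) (S : Set α) (x : α) : Set α :=
  {y | y ∈ S ∧ f x < f y}

def topK (f : α → β) (k : ℕ) (S : Set α) : Set α :=
  {x | x ∈ S ∧ (beaters f S x).ncard < k}

variable {f : α → β} {k : ℕ} {S T : Set α} {x y : α}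

theorem beaters_subset : beaters f S x ⊆ S := fun _ hy => hy.1

theorem ncard_beaters_lt_of_lt (hS : S.Finite) (hy : y ∈ S) (hxy : f x < f y) :
    (beaters f S y).ncard < (beaters f S x).ncard :=
  ncard_lt_ncard (ssubset_of_subset_not_subset (fun _ hz => ⟨hz.1, hxy.trans hz.2⟩)
    fun h => (h ⟨hy, hxy⟩).2.false) (hS.subset beaters_subset)

theorem ncard_beaters_lt_ncard (hS : S.Finite) (hx : x ∈ S) :
    (beaters f S x).ncard < S.ncard :=
  ncard_lt_ncard ⟨beaters_subset, fun h => (h hx).2.false⟩ hS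

theorem topK_subset : topK f k S ⊆ S := fun _ hx => hx.1

theorem mem_topK_of_subset (hS : S.Finite) (hTS : T ⊆ S) (hx : x ∈ topK f k S) (hxT : x ∈ T) :
    x ∈ topK f k T :=
  ⟨hxT, (ncard_le_ncard (fun _ hy => ⟨hTS hy.1, hy.2⟩ : beaters f T x ⊆ beaters f S x)
    (hS.subset beaters_subset)).trans_lt hx.2⟩

theorem mem_topK_of_lt (hS : S.Finite) (hy : y ∈ topK f k S) (hx : x ∈ S) (hyx : f y < f x) :
    x ∈ topK f k S :=
  ⟨hx, (ncard_beaters_lt_of_lt hS hx hyx).trans hy.2⟩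

theorem topK_nonempty (hS : S.Finite) (hne : S.Nonempty) (hk : 0 < k) : (topK f k S).Nonempty := by
  obtain ⟨x, hx, hmax⟩ := exists_max_image S f hS hne
  refine ⟨x, hx, ?_⟩
  rwa [show beaters f S x = ∅ from
    eq_empty_of_forall_notMem fun y hy => (hmax y hy.1).not_gt hy.2, ncard_empty]

-- The number of beaters ranks `S` bijectively onto `{0, …, |S| - 1}`.
theorem ncard_topK (hS : S.Finite) (hf : InjOn f S) : (topK f k S).ncard = min k S.ncard := by
  set rank : α → ℕ := fun x => (beaters f S x).ncard
  have rank_injOn : InjOn rank S := by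
    intro x hx y hy h
    by_contra hne
    rcases (hf.ne hx hy hne).lt_or_gt with hxy | hxy
    · exact (ncard_beaters_lt_of_lt hS hy hxy).ne h.symm
    · exact (ncard_beaters_lt_of_lt hS hx hxy).ne h
  have rank_image : rank '' S = Iio S.ncard := by
    refine eq_of_subset_of_ncard_le ?_ (by rw [ncard_Iio_nat, rank_injOn.ncard_image])
      (finite_Iio _)
    rintro _ ⟨x, hx, rfl⟩
    exact ncard_beaters_lt_ncard hS hx
  calc (topK f k S).ncard = (rank '' (S ∩ rank ⁻¹' Iio k)).ncard :=
        (rank_injOn.mono inter_subset_left).ncard_image.symm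
    _ = min k S.ncard := by
        rw [image_inter_preimage, rank_image, Iio_inter_Iio, ncard_Iio_nat, min_comm]

theorem topK_eq_self_of_ncard_lt (hS : S.Finite) (hf : InjOn f S) (hlt : (topK f k S).ncard < k) :
    topK f k S = S := by
  rw [ncard_topK hS hf] at hlt
  refine eq_of_subset_of_ncard_le topK_subset ?_ hS
  rw [ncard_topK hS hf]
  omega

theorem topK_ne_of_mem_topK_extension {P Q E : Set α} {z : α} (hE : E.Finite) (hQ : Q.Finite)
    (hf : InjOn f (E ∪ Q)) (hPE : P ⊆ E) (hzE : z ∈ topK f k E) (hzQ : z ∈ Q) (hzP : z ∉ P)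
    (hQP : ¬Q ⊆ P) : topK f k P ≠ topK f k Q := by
  intro hPQ
  by_cases hsmaller : ∃ t ∈ topK f k P, f t < f z
  · obtain ⟨t, ht, htz⟩ := hsmaller
    have hz : z ∈ topK f k Q := mem_topK_of_lt hQ (hPQ ▸ ht) hzQ htz
    exact hzP (topK_subset (hPQ ▸ hz))
  · push Not at hsmaller
    have hbeaten : topK f k P ⊆ beaters f E z := fun t ht =>
      ⟨hPE ht.1, (hsmaller t ht).lt_of_ne fun h =>
        hzP (hf (Or.inl hzE.1) (Or.inl (hPE ht.1)) h ▸ ht.1)⟩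
    have hcard : (topK f k Q).ncard < k :=
      hPQ ▸ (ncard_le_ncard hbeaten (hE.subset beaters_subset)).trans_lt hzE.2
    rw [topK_eq_self_of_ncard_lt hQ (hf.mono subset_union_right) hcard] at hPQ
    exact hQP (hPQ ▸ topK_subset)

end TopK

section Array

variable {A : ℕ → ℕ → ℝ} {n k a b c d : ℕ}

theorem InRange.mono {p : ℕ × ℕ} (hp : InRange a b p) (hca : c ≤ a) (hbd : b ≤ d) :
    InRange c d p :=
  ⟨hp.1, hca.trans hp.2.1, hp.2.2.trans hbd⟩

theorem finite_setOf_inRange (a b : ℕ) : {p | InRange a b p}.Finite :=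
  ((finite_Icc 1 2).prod (finite_Icc a b)).subset fun p hp =>
    ⟨by rcases hp.1 with h | h <;> simp [h], hp.2⟩

theorem mem_topkSet_of_le_of_le {p : ℕ × ℕ} (hp : p ∈ TopkSet A k c d) (hca : c ≤ a)
    (hbd : b ≤ d) (hpab : InRange a b p) : p ∈ TopkSet A k a b :=
  mem_topK_of_subset (finite_setOf_inRange c d) (fun _ hq => InRange.mono hq hca hbd) hp hpab

theorem topkSet_nonempty (hk : 0 < k) (hab : a ≤ b) : (TopkSet A k a b).Nonempty :=
  topK_nonempty (finite_setOf_inRange a b) ⟨(1, a), Or.inl rfl, le_rfl, hab⟩ hk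

theorem exists_mem_topkSet_rightCol (hk : 0 < k) (hab : a ≤ b) :
    ∃ r, (r, rightCol A k a b) ∈ TopkSet A k a b := by
  obtain ⟨p, hp⟩ := topkSet_nonempty (A := A) hk hab
  exact Nat.sSup_mem (s := {c | ∃ r, (r, c) ∈ TopkSet A k a b}) ⟨p.2, p.1, hp⟩
    ⟨b, fun _ ⟨_, hr⟩ => hr.1.2.2⟩

theorem exists_mem_topkSet_leftCol (hk : 0 < k) (hab : a ≤ b) :
    ∃ r, (r, leftCol A k a b) ∈ TopkSet A k a b := by
  obtain ⟨p, hp⟩ := topkSet_nonempty (A := A) hk hab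
  exact Nat.sInf_mem (s := {c | ∃ r, (r, c) ∈ TopkSet A k a b}) ⟨p.2, p.1, hp⟩

structure NodeInvariant (A : ℕ → ℕ → ℝ) (n k : ℕ) (v : ℕ × ℕ) : Prop where
  one_le : 1 ≤ v.1
  le : v.1 ≤ v.2
  le_n : v.2 ≤ n
  left : v.1 = 1 ∨ ∃ r, (r, v.1 - 1) ∈ TopkSet A k (v.1 - 1) v.2
  right : v.2 = n ∨ ∃ r, (r, v.2 + 1) ∈ TopkSet A k v.1 (v.2 + 1)

theorem NodeInvariant.isChild (hk : 0 < k) {p q : ℕ × ℕ} (hq : NodeInvariant A n k q)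
    (hqp : IsChild A k q p) : NodeInvariant A n k p := by
  obtain ⟨a, b⟩ := q
  obtain ⟨ha, hab, hbn, hleft, hright⟩ := hq
  rcases hqp.2 with ⟨rfl, hlt⟩ | ⟨rfl, hlt⟩
  · obtain ⟨r, hr⟩ := exists_mem_topkSet_rightCol (A := A) hk hab
    set b' := rightCol A k a b
    have hb' : b' ≤ b := hr.1.2.2
    refine ⟨ha, by dsimp only; omega, by dsimp only; omega, ?_, .inr ⟨r, ?_⟩⟩
    · refine hleft.imp_right fun ⟨r', hr'⟩ => ⟨r', mem_topkSet_of_le_of_le hr' le_rfl (by omega)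
        ⟨hr'.1.1, le_rfl, by dsimp only; omega⟩⟩
    · rw [show b' - 1 + 1 = b' by omega]
      exact mem_topkSet_of_le_of_le hr le_rfl hb' ⟨hr.1.1, hlt.le, le_rfl⟩
  · obtain ⟨r, hr⟩ := exists_mem_topkSet_leftCol (A := A) hk hab
    set a' := leftCol A k a b
    have ha' : a ≤ a' := hr.1.2.1
    refine ⟨by dsimp only; omega, by dsimp only; omega, hbn, .inr ⟨r, ?_⟩, ?_⟩
    · rw [show a' + 1 - 1 = a' by omega]
      exact mem_topkSet_of_le_of_le hr ha' le_rfl ⟨hr.1.1, le_rfl, hlt.le⟩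
    · refine hright.imp_right fun ⟨r', hr'⟩ => ⟨r', mem_topkSet_of_le_of_le hr' (by omega) le_rfl
        ⟨hr'.1.1, by dsimp only; omega, le_rfl⟩⟩

theorem IsNode.nodeInvariant (hn : 1 ≤ n) (hk : 0 < k) {v : ℕ × ℕ} (hv : IsNode A k n v) :
    NodeInvariant A n k v := by
  induction hv with
  | root => exact ⟨le_rfl, hn, le_rfl, .inl rfl, .inl rfl⟩
  | child _ hqp ih => exact ih.isChild hk hqp

theorem topkSet_ne_of_snd_lt (hk : 0 < k) (hA : DistinctEntries A n) {p q : ℕ × ℕ}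
    (hp : NodeInvariant A n k p) (hq : NodeInvariant A n k q) (hlt : p.2 < q.2) :
    TopkSet A k p.1 p.2 ≠ TopkSet A k q.1 q.2 := by
  intro hT
  obtain ⟨t, ht⟩ := topkSet_nonempty (A := A) hk hp.le
  have hqt : q.1 ≤ t.2 := (hT ▸ ht).1.2.1
  have htp : t.2 ≤ p.2 := ht.1.2.2
  obtain ⟨r, hr⟩ := hp.right.resolve_left (by have := hq.le_n; omega)
  refine topK_ne_of_mem_topK_extension (finite_setOf_inRange _ _) (finite_setOf_inRange _ _)
    (InjOn.mono ?_ hA) (fun _ hx => InRange.mono hx le_rfl p.2.le_succ) hr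
    ⟨hr.1.1, by omega, by omega⟩ (fun h => by have := h.2.2; omega) (fun h => ?_) hT
  · rintro x (hx | hx)
    · exact InRange.mono hx hp.one_le (by have := hq.le_n; omega)
    · exact InRange.mono hx hq.one_le hq.le_n
  · have := (h (a := (1, q.2)) ⟨Or.inl rfl, hq.le, le_rfl⟩).2.2
    omega

theorem topkSet_ne_of_fst_lt (hk : 0 < k) (hA : DistinctEntries A n) {p q : ℕ × ℕ}
    (hp : NodeInvariant A n k p) (hq : NodeInvariant A n k q) (hlt : q.1 < p.1) :
    TopkSet A k p.1 p.2 ≠ TopkSet A k q.1 q.2 := by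
  intro hT
  obtain ⟨t, ht⟩ := topkSet_nonempty (A := A) hk hp.le
  have htq : t.2 ≤ q.2 := (hT ▸ ht).1.2.2
  have htp : p.1 ≤ t.2 := ht.1.2.1
  obtain ⟨r, hr⟩ := hp.left.resolve_left (by have := hq.one_le; omega)
  refine topK_ne_of_mem_topK_extension (finite_setOf_inRange _ _) (finite_setOf_inRange _ _)
    (InjOn.mono ?_ hA) (fun _ hx => InRange.mono hx (Nat.sub_le _ 1) le_rfl) hr
    ⟨hr.1.1, by omega, by omega⟩ (fun h => by have := h.2.1; omega) (fun h => ?_) hT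
  · rintro x (hx | hx)
    · exact InRange.mono hx (by have := hq.one_le; omega) hp.le_n
    · exact InRange.mono hx hq.one_le hq.le_n
  · have := (h (a := (1, q.1)) ⟨Or.inl rfl, le_rfl, hq.le⟩).2.1
    omega

end Array

/-- Any two distinct nodes of `D^k_A` have different Top-k answer sets. -/
theorem dag_distinct_topk (A : ℕ → ℕ → ℝ) (n k : ℕ) (hn : 1 ≤ n) (hk : 1 ≤ k)
    (hA : DistinctEntries A n) (p q : ℕ × ℕ)
    (hp : IsNode A k n p) (hq : IsNode A k n q) (hpq : p ≠ q) :
    TopkSet A k p.1 p.2 ≠ TopkSet A k q.1 q.2 := by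
  have hp := hp.nodeInvariant hn hk
  have hq := hq.nodeInvariant hn hk
  rcases lt_trichotomy p.2 q.2 with h2 | h2 | h2
  · exact topkSet_ne_of_snd_lt hk hA hp hq h2
  · rcases lt_trichotomy p.1 q.1 with h1 | h1 | h1
    · exact (topkSet_ne_of_fst_lt hk hA hq hp h1).symm
    · exact absurd (Prod.ext h1 h2) hpq
    · exact topkSet_ne_of_fst_lt hk hA hp hq h1
  · exact (topkSet_ne_of_snd_lt hk hA hq hp h2).symm
end

section
/- Let A be a 2×n array with distinct entries, and for 1 ≤ i ≤ n let f_i be the number of positions among the k largest elements of A[1,2][1..i] that lie in the first row. Then for every i with ⌊k/2⌋ < i ≤ n−1 (where both f_i and f_{i+1} count exactly k answers among 2i ≥ k entries), we have |f_{i+1} − f_i| ≤ 1. -/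
open scoped Classical
open Finset

/-- `f_i` : the number of first-row positions among the `k` largest elements of
`A[1,2][1..i]`. -/
noncomputable def fRow (A : ℕ → ℕ → ℝ) (k i : ℕ) : ℕ :=
  {c : ℕ | (1, c) ∈ TopkSet A k 1 i}.ncard

/-- `s_i` : the number of second-row positions among the `k` largest elements of
`A[1,2][1..i]`. -/
noncomputable def sRow (A : ℕ → ℕ → ℝ) (k i : ℕ) : ℕ :=
  {c : ℕ | (2, c) ∈ TopkSet A k 1 i}.ncard

namespace FRowStep

/-- The finset of positions in columns `1..i`. -/
noncomputable def Pos (i : ℕ) : Finset (ℕ × ℕ) :=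
  ({1, 2} : Finset ℕ) ×ˢ Finset.Icc 1 i

lemma mem_Pos {i : ℕ} {p : ℕ × ℕ} : p ∈ Pos i ↔ InRange 1 i p := by
  simp [Pos, InRange, Finset.mem_product, and_assoc]

lemma card_Pos (i : ℕ) : (Pos i).card = 2 * i := by
  simp [Pos, Finset.card_product]

/-- Finset of elements in columns `1..i` strictly bigger than `A p`. -/
noncomputable def bigger (A : ℕ → ℕ → ℝ) (i : ℕ) (p : ℕ × ℕ) : Finset (ℕ × ℕ) :=
  (Pos i).filter (fun q => A p.1 p.2 < A q.1 q.2)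

lemma mem_topk {A : ℕ → ℕ → ℝ} {k i : ℕ} {p : ℕ × ℕ} :
    p ∈ TopkSet A k 1 i ↔ p ∈ Pos i ∧ (bigger A i p).card < k := by
  have h : {q | InRange 1 i q ∧ A p.1 p.2 < A q.1 q.2} = ↑(bigger A i p) := by
    ext q; simp [bigger, mem_Pos]
  simp only [TopkSet, Set.mem_setOf_eq, h, Set.ncard_coe_finset, mem_Pos]

lemma bigger_mono {A : ℕ → ℕ → ℝ} {i : ℕ} (p : ℕ × ℕ) :
    bigger A i p ⊆ bigger A (i + 1) p := by
  apply Finset.filter_subset_filter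
  exact Finset.product_subset_product (Finset.Subset.refl _)
    (Finset.Icc_subset_Icc le_rfl (by omega))

lemma bigger_card_lt {A : ℕ → ℕ → ℝ} {i : ℕ} {p : ℕ × ℕ} (hp : p ∈ Pos i) :
    (bigger A i p).card < 2 * i := by
  have hsub : bigger A i p ⊆ (Pos i).erase p := by
    intro q hq
    rcases Finset.mem_filter.1 hq with ⟨hq1, hq2⟩
    exact Finset.mem_erase.2 ⟨by rintro rfl; exact lt_irrefl _ hq2, hq1⟩
  calc (bigger A i p).card ≤ ((Pos i).erase p).card := Finset.card_le_card hsub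
    _ < (Pos i).card := Finset.card_erase_lt_of_mem hp
    _ = 2 * i := card_Pos i

lemma bigger_card_injOn {A : ℕ → ℕ → ℝ} {n i : ℕ} (hA : DistinctEntries A n) (hin : i ≤ n) :
    Set.InjOn (fun p => (bigger A i p).card) (Pos i : Set (ℕ × ℕ)) := by
  have hR : ∀ p : ℕ × ℕ, p ∈ Pos i → InRange 1 n p := by
    intro p hp
    rcases mem_Pos.1 hp with ⟨h1, h2, h3⟩
    exact ⟨h1, h2, le_trans h3 hin⟩
  intro p hp q hq hcard
  by_contra hne
  have hAne : A p.1 p.2 ≠ A q.1 q.2 := fun h => hne (hA (hR p hp) (hR q hq) h)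
  have key : ∀ r s : ℕ × ℕ, r ∈ Pos i → s ∈ Pos i →
      A r.1 r.2 < A s.1 s.2 → (bigger A i s).card < (bigger A i r).card := by
    intro r s hr hs hlt
    apply Finset.card_lt_card
    rw [Finset.ssubset_iff_of_subset]
    · refine ⟨s, Finset.mem_filter.2 ⟨hs, hlt⟩, ?_⟩
      intro hmem
      exact lt_irrefl _ (Finset.mem_filter.1 hmem).2
    · intro x hx
      rcases Finset.mem_filter.1 hx with ⟨hx1, hx2⟩
      exact Finset.mem_filter.2 ⟨hx1, lt_trans hlt hx2⟩
  rcases lt_or_gt_of_ne hAne with h | h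
  · exact absurd hcard (Nat.ne_of_gt (key p q hp hq h))
  · exact absurd hcard (Nat.ne_of_lt (key q p hq hp h))

lemma topk_card {A : ℕ → ℕ → ℝ} {n k i : ℕ} (hA : DistinctEntries A n) (hin : i ≤ n)
    (hki : k ≤ 2 * i) :
    ((Pos i).filter (fun p => (bigger A i p).card < k)).card = k := by
  set g : ℕ × ℕ → ℕ := fun p => (bigger A i p).card with hg
  have hinj : Set.InjOn g (Pos i : Set (ℕ × ℕ)) := bigger_card_injOn hA hin
  have himage : (Pos i).image g = Finset.range (2 * i) := by
    apply Finset.eq_of_subset_of_card_le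
    · intro x hx
      rcases Finset.mem_image.1 hx with ⟨p, hp, rfl⟩
      exact Finset.mem_range.2 (bigger_card_lt hp)
    · rw [Finset.card_range, Finset.card_image_of_injOn hinj, card_Pos]
  have h1 : (((Pos i).filter (fun p => g p < k)).image g).card
      = ((Pos i).filter (fun p => g p < k)).card := by
    apply Finset.card_image_of_injOn
    exact hinj.mono (by intro x hx; exact Finset.mem_coe.2 (Finset.mem_of_mem_filter x (Finset.mem_coe.1 hx)))
  have h2 : ((Pos i).filter (fun p => g p < k)).image g
      = ((Pos i).image g).filter (fun x => x < k) := by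
    ext x
    simp only [Finset.mem_image, Finset.mem_filter]
    constructor
    · rintro ⟨p, ⟨hp1, hp2⟩, rfl⟩
      exact ⟨⟨p, hp1, rfl⟩, hp2⟩
    · rintro ⟨⟨p, hp, rfl⟩, hlt⟩
      exact ⟨p, ⟨hp, hlt⟩, rfl⟩
  have h3 : ((Pos i).image g).filter (fun x => x < k) = Finset.range k := by
    rw [himage]
    ext x
    simp only [Finset.mem_filter, Finset.mem_range]
    omega
  rw [← h1, h2, h3, Finset.card_range]

lemma topk_split {A : ℕ → ℕ → ℝ} {k i : ℕ} :
    ((Pos i).filter (fun p => (bigger A i p).card < k)).card =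
      ((Finset.Icc 1 i).filter (fun c => ((1 : ℕ), c) ∈ TopkSet A k 1 i)).card +
      ((Finset.Icc 1 i).filter (fun c => ((2 : ℕ), c) ∈ TopkSet A k 1 i)).card := by
  have hsplit : (Pos i).filter (fun p => (bigger A i p).card < k) =
      ((Finset.Icc 1 i).filter (fun c => ((1 : ℕ), c) ∈ TopkSet A k 1 i)).image
        (fun c => ((1 : ℕ), c)) ∪
      ((Finset.Icc 1 i).filter (fun c => ((2 : ℕ), c) ∈ TopkSet A k 1 i)).image
        (fun c => ((2 : ℕ), c)) := by
    ext ⟨a, b⟩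
    simp only [Finset.mem_filter, Finset.mem_union, Finset.mem_image, Prod.mk.injEq]
    constructor
    · rintro ⟨hp, hcard⟩
      have hm := mem_Pos.1 hp
      rcases hm.1 with h1 | h1
      · subst h1
        exact Or.inl ⟨b, ⟨Finset.mem_Icc.2 ⟨hm.2.1, hm.2.2⟩,
          mem_topk.2 ⟨hp, hcard⟩⟩, rfl, rfl⟩
      · subst h1
        exact Or.inr ⟨b, ⟨Finset.mem_Icc.2 ⟨hm.2.1, hm.2.2⟩,
          mem_topk.2 ⟨hp, hcard⟩⟩, rfl, rfl⟩
    · rintro (⟨c, ⟨_, htop⟩, rfl, rfl⟩ | ⟨c, ⟨_, htop⟩, rfl, rfl⟩) <;>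
        exact mem_topk.1 htop
  rw [hsplit, Finset.card_union_of_disjoint, Finset.card_image_of_injective _
      (fun a b h => by simpa using h), Finset.card_image_of_injective _
      (fun a b h => by simpa using h)]
  · rw [Finset.disjoint_left]
    rintro ⟨a, b⟩ h1 h2
    rcases Finset.mem_image.1 h1 with ⟨c, _, hc⟩
    rcases Finset.mem_image.1 h2 with ⟨d, _, hd⟩
    rw [← hd] at hc
    simp at hc
  
lemma fRow_eq {A : ℕ → ℕ → ℝ} {k i : ℕ} :
    fRow A k i = ((Finset.Icc 1 i).filter (fun c => ((1 : ℕ), c) ∈ TopkSet A k 1 i)).card := by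
  rw [fRow]
  have h : {c : ℕ | (1, c) ∈ TopkSet A k 1 i}
      = ↑((Finset.Icc 1 i).filter (fun c => ((1 : ℕ), c) ∈ TopkSet A k 1 i)) := by
    ext c
    simp only [Set.mem_setOf_eq, Finset.coe_filter, Finset.mem_Icc]
    constructor
    · intro h
      have := (mem_topk.1 h).1
      rcases mem_Pos.1 this with ⟨_, h2, h3⟩
      exact ⟨⟨h2, h3⟩, h⟩
    · exact fun h => h.2
  rw [h, Set.ncard_coe_finset]

lemma sRow_eq {A : ℕ → ℕ → ℝ} {k i : ℕ} :
    sRow A k i = ((Finset.Icc 1 i).filter (fun c => ((2 : ℕ), c) ∈ TopkSet A k 1 i)).card := by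
  rw [sRow]
  have h : {c : ℕ | (2, c) ∈ TopkSet A k 1 i}
      = ↑((Finset.Icc 1 i).filter (fun c => ((2 : ℕ), c) ∈ TopkSet A k 1 i)) := by
    ext c
    simp only [Set.mem_setOf_eq, Finset.coe_filter, Finset.mem_Icc]
    constructor
    · intro h
      have := (mem_topk.1 h).1
      rcases mem_Pos.1 this with ⟨_, h2, h3⟩
      exact ⟨⟨h2, h3⟩, h⟩
    · exact fun h => h.2
  rw [h, Set.ncard_coe_finset]

lemma step_subset {A : ℕ → ℕ → ℝ} {k i : ℕ} (r : ℕ) :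
    ((Finset.Icc 1 (i + 1)).filter (fun c => ((r : ℕ), c) ∈ TopkSet A k 1 (i + 1))) ⊆
      insert (i + 1) ((Finset.Icc 1 i).filter (fun c => ((r : ℕ), c) ∈ TopkSet A k 1 i)) := by
  intro c hc
  rcases Finset.mem_filter.1 hc with ⟨hc1, hc2⟩
  rcases Finset.mem_Icc.1 hc1 with ⟨h1, h2⟩
  by_cases hci : c = i + 1
  · simp [hci]
  · apply Finset.mem_insert_of_mem
    refine Finset.mem_filter.2 ⟨Finset.mem_Icc.2 ⟨h1, by omega⟩, ?_⟩
    rcases mem_topk.1 hc2 with ⟨hp, hcard⟩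
    refine mem_topk.2 ⟨?_, lt_of_le_of_lt (Finset.card_le_card (bigger_mono _)) hcard⟩
    rcases Finset.mem_product.1 hp with ⟨ha, hb⟩
    exact Finset.mem_product.2 ⟨ha, Finset.mem_Icc.2 ⟨h1, by omega⟩⟩

end FRowStep

/-- For `⌊k/2⌋ < i ≤ n - 1`, the number of first-row answers changes by at most one
when the query range grows by one column: `|f_{i+1} - f_i| ≤ 1`. -/
theorem fRow_step (A : ℕ → ℕ → ℝ) (n k : ℕ) (hk : 1 ≤ k) (hkn : k ≤ 2 * n)
    (hA : DistinctEntries A n) (i : ℕ) (hi : k / 2 < i) (hin : i ≤ n - 1) :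
    fRow A k (i + 1) ≤ fRow A k i + 1 ∧ fRow A k i ≤ fRow A k (i + 1) + 1 := by
  have hn1 : 1 ≤ n := by omega
  have hii : i + 1 ≤ n := by omega
  have hin' : i ≤ n := by omega
  have hk2i : k ≤ 2 * i := by omega
  have hk2i1 : k ≤ 2 * (i + 1) := by omega
  have h1 : fRow A k i + sRow A k i = k := by
    rw [FRowStep.fRow_eq, FRowStep.sRow_eq, ← FRowStep.topk_split]
    exact FRowStep.topk_card hA hin' hk2i
  have h2 : fRow A k (i + 1) + sRow A k (i + 1) = k := by
    rw [FRowStep.fRow_eq, FRowStep.sRow_eq, ← FRowStep.topk_split]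
    exact FRowStep.topk_card hA hii hk2i1
  have h3 : fRow A k (i + 1) ≤ fRow A k i + 1 := by
    rw [FRowStep.fRow_eq, FRowStep.fRow_eq]
    calc _ ≤ (insert (i + 1) ((Finset.Icc 1 i).filter
          (fun c => ((1 : ℕ), c) ∈ TopkSet A k 1 i))).card :=
        Finset.card_le_card (FRowStep.step_subset 1)
      _ ≤ _ := Finset.card_insert_le _ _
  have h4 : sRow A k (i + 1) ≤ sRow A k i + 1 := by
    rw [FRowStep.sRow_eq, FRowStep.sRow_eq]
    calc _ ≤ (insert (i + 1) ((Finset.Icc 1 i).filter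
          (fun c => ((2 : ℕ), c) ∈ TopkSet A k 1 i))).card :=
        Finset.card_le_card (FRowStep.step_subset 2)
      _ ≤ _ := Finset.card_insert_le _ _
  omega
end
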